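/- arXiv:1508.00792 — 2 statements merged into one kernel-verified Lean document; each statement's English description precedes it below -/
import Mathlib

section
/- Let L be an N×N Hermitian positive definite complex matrix and set L' = L + L Δ(L) L. Then φ(L') ≥ φ(L). (Single-step ascent underlying Theorem 1.) -/
/-!
Write `L' = L + K` with `K = L Δ L` and `Xᵢ = Uᵢ (Uᵢ* L Uᵢ)⁻¹ Uᵢ*`. The tangent-line bound for
the concave function `log det` gives, for each sample, together with the compression inequality
`U (U* L' U)⁻¹ U* ≤ L'⁻¹`, the lower bound
`log det (Uᵢ* L' Uᵢ) ≥ log det (Uᵢ* L Uᵢ) + tr (Xᵢ (L - L L'⁻¹ L))`, and for the normalizer the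
upper bound `log det (I + L') ≤ log det (I + L) + tr ((I + L)⁻¹ K)`. Since
`∑ Xᵢ = n (Δ + (I + L)⁻¹)`, the difference of the two bounds collapses to
`n · tr ((L⁻¹ - (I + L)⁻¹) K L'⁻¹ K)`, the trace of a product of two positive semidefinite
matrices. That `L'` is positive definite at all follows from
`L' = n⁻¹ ∑ L Xᵢ L + L (L⁻¹ - (I + L)⁻¹) L`.
-/

open Matrix
open scoped ComplexOrder

/-- Δ(L) = (1/n)∑ᵢ Uᵢ(Uᵢ*LUᵢ)⁻¹Uᵢ* − (I+L)⁻¹. -/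
noncomputable def Delta {N n : ℕ} {k : Fin n → ℕ}
    (U : (i : Fin n) → Matrix (Fin N) (Fin (k i)) ℂ)
    (L : Matrix (Fin N) (Fin N) ℂ) : Matrix (Fin N) (Fin N) ℂ :=
  (n : ℂ)⁻¹ • (∑ i, U i * ((U i)ᴴ * L * U i)⁻¹ * (U i)ᴴ) - (1 + L)⁻¹

/-- The DPP log-likelihood φ(L) = ∑ᵢ log det(Uᵢ*LUᵢ) − n·log det(I+L). -/
noncomputable def phi {N n : ℕ} {k : Fin n → ℕ}
    (U : (i : Fin n) → Matrix (Fin N) (Fin (k i)) ℂ)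
    (L : Matrix (Fin N) (Fin N) ℂ) : ℝ :=
  (∑ i, Real.log (((U i)ᴴ * L * U i).det.re)) - n * Real.log ((1 + L).det.re)

namespace Matrix

open scoped MatrixOrder

variable {m l : Type*} [Fintype m] [Fintype l] [DecidableEq m] [DecidableEq l]

lemma PosSemidef.re_trace_mul_nonneg {A B : Matrix m m ℂ} (hA : A.PosSemidef)
    (hB : B.PosSemidef) : 0 ≤ (A * B).trace.re := by
  obtain ⟨C, rfl⟩ := CStarAlgebra.nonneg_iff_eq_star_mul_self.mp hA.nonneg
  rw [star_eq_conjTranspose, Matrix.mul_assoc, trace_mul_comm]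
  exact (Complex.nonneg_iff.mp (hB.mul_mul_conjTranspose_same C).trace_nonneg).1

lemma PosDef.ofReal_re_det {A : Matrix m m ℂ} (hA : A.PosDef) : (A.det.re : ℂ) = A.det :=
  (Complex.eq_re_of_ofReal_le hA.det_pos.le).symm

lemma PosDef.log_re_det_le_re_trace_sub_card {A : Matrix m m ℂ} (hA : A.PosDef) :
    Real.log A.det.re ≤ A.trace.re - Fintype.card m := by
  have hdet : A.det.re = ∏ i, hA.1.eigenvalues i := by
    rw [hA.1.det_eq_prod_eigenvalues]; norm_cast
  have htr : A.trace.re = ∑ i, hA.1.eigenvalues i := by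
    rw [hA.1.trace_eq_sum_eigenvalues]; norm_cast
  rw [hdet, htr, Real.log_prod fun i _ => (hA.eigenvalues_pos i).ne']
  calc ∑ i, Real.log (hA.1.eigenvalues i) ≤ ∑ i, (hA.1.eigenvalues i - 1) :=
        Finset.sum_le_sum fun i _ => Real.log_le_sub_one_of_pos (hA.eigenvalues_pos i)
    _ = (∑ i, hA.1.eigenvalues i) - Fintype.card m := by simp [Finset.sum_sub_distrib]

lemma PosDef.log_re_det_le_add_re_trace {A B : Matrix m m ℂ} (hA : A.PosDef) (hB : B.PosDef) :
    Real.log A.det.re ≤ Real.log B.det.re + (B⁻¹ * (A - B)).trace.re := by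
  obtain ⟨C, rfl⟩ := CStarAlgebra.nonneg_iff_eq_star_mul_self.mp hB.posSemidef.nonneg
  rw [star_eq_conjTranspose] at hB ⊢
  have hC : IsUnit C.det := by
    have := hB.det_pos.ne'.isUnit
    rw [det_mul] at this
    exact isUnit_of_mul_isUnit_right this
  have hCH : IsUnit Cᴴ.det := by rw [det_conjTranspose]; exact hC.star
  obtain ⟨D, hD, rfl⟩ : ∃ D : Matrix m m ℂ, D.PosDef ∧ A = Cᴴ * D * C := by
    refine ⟨(C⁻¹)ᴴ * A * C⁻¹, hA.conjTranspose_mul_mul_same ?_, ?_⟩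
    · exact mulVec_injective_iff_isUnit.mpr
        ((isUnit_iff_isUnit_det _).mpr (isUnit_nonsing_inv_det C hC))
    · simp only [conjTranspose_nonsing_inv, Matrix.mul_assoc, nonsing_inv_mul _ hC, mul_one,
        mul_nonsing_inv_cancel_left _ _ hCH]
  have hdet : (Cᴴ * D * C).det.re = (Cᴴ * C).det.re * D.det.re := by
    rw [← Complex.ofReal_inj, Complex.ofReal_mul, hA.ofReal_re_det, hB.ofReal_re_det,
      hD.ofReal_re_det, det_mul, det_mul, det_mul]
    ring
  have htr : ((Cᴴ * C)⁻¹ * (Cᴴ * D * C - Cᴴ * C)).trace = D.trace - Fintype.card m := by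
    have hCC : C * (Cᴴ * C)⁻¹ * Cᴴ = 1 := by
      rw [Matrix.mul_inv_rev, Matrix.mul_assoc, nonsing_inv_mul_cancel_right _ _ hCH,
        mul_nonsing_inv _ hC]
    rw [Matrix.mul_sub, nonsing_inv_mul _ hB.det_pos.ne'.isUnit, trace_sub, trace_one,
      ← Matrix.mul_assoc, trace_mul_comm, ← Matrix.mul_assoc, ← Matrix.mul_assoc, hCC, one_mul]
  rw [hdet, Real.log_mul (Complex.pos_iff.mp hB.det_pos).1.ne'
    (Complex.pos_iff.mp hD.det_pos).1.ne', htr, Complex.sub_re, Complex.natCast_re]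
  linarith [hD.log_re_det_le_re_trace_sub_card]

lemma PosDef.mul_inv_conj_mul_le_inv {B : Matrix m m ℂ} (hB : B.PosDef) {W : Matrix m l ℂ}
    (hW : IsUnit (Wᴴ * B * W).det) : W * (Wᴴ * B * W)⁻¹ * Wᴴ ≤ B⁻¹ := by
  set X := W * (Wᴴ * B * W)⁻¹ * Wᴴ
  have hX : X.IsHermitian := by
    simpa [X] using
      isHermitian_conjTranspose_mul_mul Wᴴ (isHermitian_conjTranspose_mul_mul W hB.1).inv
  have hXBX : X * B * X = X := by
    calc X * B * X = W * ((Wᴴ * B * W)⁻¹ * ((Wᴴ * B * W) * (Wᴴ * B * W)⁻¹)) * Wᴴ := by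
          simp only [X, Matrix.mul_assoc]
      _ = X := by rw [mul_nonsing_inv _ hW, mul_one]
  have hBdet : IsUnit B.det := hB.det_pos.ne'.isUnit
  have hsq : B⁻¹ - X = (B⁻¹ - X)ᴴ * B * (B⁻¹ - X) := by
    rw [conjTranspose_sub, hB.1.inv.eq, hX.eq, sub_mul, sub_mul, mul_sub, mul_sub, hXBX,
      nonsing_inv_mul _ hBdet, Matrix.mul_assoc X, mul_nonsing_inv _ hBdet, one_mul, one_mul,
      mul_one]
    abel
  rw [le_iff, hsq]
  exact hB.posSemidef.conjTranspose_mul_mul_same _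

lemma re_trace_inv_conj_mul_conj_le {L L' : Matrix m m ℂ} (hL : L.PosSemidef) (hL' : L'.PosDef)
    {U : Matrix m l ℂ} (hM : IsUnit (Uᴴ * L * U).det) (hM' : IsUnit (Uᴴ * L' * U).det) :
    ((Uᴴ * L' * U)⁻¹ * (Uᴴ * L * U)).trace.re ≤
      (U * (Uᴴ * L * U)⁻¹ * Uᴴ * (L * L'⁻¹ * L)).trace.re := by
  set X := U * (Uᴴ * L * U)⁻¹ * Uᴴ
  set Y := U * (Uᴴ * L' * U)⁻¹ * Uᴴ
  have hLXL : (L * X * L).PosSemidef := by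
    simpa [hL.1.eq] using ((hL.conjTranspose_mul_mul_same U).inv.mul_mul_conjTranspose_same
      U).conjTranspose_mul_mul_same L
  have hUL : Uᴴ * L * X * L = Uᴴ * L := by
    simp only [X, ← Matrix.mul_assoc, mul_nonsing_inv _ hM, Matrix.one_mul]
  have hlhs : ((Uᴴ * L' * U)⁻¹ * (Uᴴ * L * U)).trace = (Y * (L * X * L)).trace := by
    rw [← hUL]
    simp only [Y, ← Matrix.mul_assoc]
    rw [trace_mul_comm]
    simp only [Matrix.mul_assoc]
  have hrhs : (X * (L * L'⁻¹ * L)).trace = (L'⁻¹ * (L * X * L)).trace := by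
    rw [show X * (L * L'⁻¹ * L) = X * L * (L'⁻¹ * L) by simp only [Matrix.mul_assoc],
      trace_mul_comm]
    simp only [Matrix.mul_assoc]
  have := (hL'.mul_inv_conj_mul_le_inv hM').re_trace_mul_nonneg hLXL
  rw [sub_mul, trace_sub, Complex.sub_re] at this
  rw [hlhs, hrhs]
  linarith

lemma log_re_det_conj_add_re_trace_le {L L' : Matrix m m ℂ} (hL : L.PosDef) (hL' : L'.PosDef)
    {U : Matrix m l ℂ} (hU : Function.Injective U.mulVec) :
    Real.log (Uᴴ * L * U).det.re + (U * (Uᴴ * L * U)⁻¹ * Uᴴ * (L - L * L'⁻¹ * L)).trace.re ≤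
      Real.log (Uᴴ * L' * U).det.re := by
  have hM := hL.conjTranspose_mul_mul_same hU
  have hM' := hL'.conjTranspose_mul_mul_same hU
  have hcard : (U * (Uᴴ * L * U)⁻¹ * Uᴴ * L).trace = Fintype.card l := by
    rw [Matrix.mul_assoc, Matrix.mul_assoc, trace_mul_comm, Matrix.mul_assoc,
      nonsing_inv_mul _ hM.det_pos.ne'.isUnit, trace_one]
  have hconcave := hM.log_re_det_le_add_re_trace hM'
  rw [Matrix.mul_sub, nonsing_inv_mul _ hM'.det_pos.ne'.isUnit, trace_sub, trace_one,
    Complex.sub_re] at hconcave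
  rw [Matrix.mul_sub, trace_sub, Complex.sub_re, hcard]
  have := re_trace_inv_conj_mul_conj_le hL.posSemidef hL' hM.det_pos.ne'.isUnit
    hM'.det_pos.ne'.isUnit
  simp only [Complex.natCast_re] at hconcave ⊢
  linarith

lemma PosDef.inv_sub_inv_one_add {L : Matrix m m ℂ} (hL : L.PosDef) :
    (L⁻¹ - (1 + L)⁻¹).PosDef := by
  have hLL : (L * L).PosSemidef := by
    simpa [hL.1.eq] using posSemidef_conjTranspose_mul_self L
  have hLu : IsUnit L.det := hL.det_pos.ne'.isUnit
  have h1Lu : IsUnit (1 + L).det := (hL.posSemidef_add PosSemidef.one).det_pos.ne'.isUnit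
  have h : (L + L * L)⁻¹ = L⁻¹ - (1 + L)⁻¹ := by
    refine inv_eq_left_inv ?_
    rw [sub_mul, show L + L * L = (1 + L) * L by noncomm_ring, ← Matrix.mul_assoc,
      ← Matrix.mul_assoc, nonsing_inv_mul _ h1Lu, Matrix.one_mul, Matrix.mul_add, mul_one,
      nonsing_inv_mul _ hLu, add_mul, Matrix.one_mul, nonsing_inv_mul _ hLu]
    abel
  exact h ▸ (hL.add_posSemidef hLL).inv

lemma add_mul_sub_mul_inv_mul_sub_mul {R : Type*} [CommRing R] {L Δ J K : Matrix m m R}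
    (hK : K = L * Δ * L) (hL : IsUnit L.det) (hL' : IsUnit (L + K).det) :
    (Δ + J) * (L - L * (L + K)⁻¹ * L) - J * K = (L⁻¹ - J) * K * (L + K)⁻¹ * K := by
  set L' := L + K
  have hL'L : L' - L = K := add_sub_cancel_left L K
  have hL'K : L' - K = L := add_sub_cancel_right L K
  have hleft : L - L * L'⁻¹ * L = L * L'⁻¹ * K := by
    calc L - L * L'⁻¹ * L = L * L'⁻¹ * L' - L * L'⁻¹ * L := by
          rw [nonsing_inv_mul_cancel_right _ _ hL']
      _ = L * L'⁻¹ * K := by rw [← mul_sub, hL'L]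
  have hright : L - L * L'⁻¹ * L - K = -(K * L'⁻¹ * K) := by
    calc L - L * L'⁻¹ * L - K = (L' - L) * L'⁻¹ * (L' - K) - K := by
          rw [sub_mul, sub_mul, mul_nonsing_inv _ hL', Matrix.one_mul, hL'K]
      _ = -(K * L'⁻¹ * K) := by
          rw [hL'L, mul_sub, nonsing_inv_mul_cancel_right _ _ hL']
          abel
  have hK' : L⁻¹ * K = Δ * L := by
    simp only [hK, ← Matrix.mul_assoc, nonsing_inv_mul _ hL, Matrix.one_mul]
  calc (Δ + J) * (L - L * L'⁻¹ * L) - J * K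
      = Δ * (L - L * L'⁻¹ * L) + J * (L - L * L'⁻¹ * L - K) := by noncomm_ring
    _ = Δ * L * L'⁻¹ * K - J * K * L'⁻¹ * K := by
      rw [hright, hleft]; simp only [Matrix.mul_assoc, mul_neg]; abel
    _ = (L⁻¹ - J) * K * L'⁻¹ * K := by
      rw [sub_mul, hK']; simp only [Matrix.mul_assoc, sub_mul]

end Matrix

section DPP

variable {N n : ℕ} {k : Fin n → ℕ} (U : (i : Fin n) → Matrix (Fin N) (Fin (k i)) ℂ)
  {L : Matrix (Fin N) (Fin N) ℂ}

lemma posDef_add_mul_Delta_mul (hL : L.PosDef) : (L + L * Delta U L * L).PosDef := by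
  set S := ∑ i, U i * ((U i)ᴴ * L * U i)⁻¹ * (U i)ᴴ
  have hS : (L * S * L).PosSemidef := by
    rw [Finset.mul_sum, Finset.sum_mul]
    refine posSemidef_sum _ fun i _ => ?_
    simpa [hL.1.eq] using (((hL.posSemidef.conjTranspose_mul_mul_same (U i)).inv
      ).mul_mul_conjTranspose_same (U i)).conjTranspose_mul_mul_same L
  have hsplit : L + L * Delta U L * L = (n : ℂ)⁻¹ • (L * S * L) + L * (L⁻¹ - (1 + L)⁻¹) * L := by
    rw [Delta, mul_sub, sub_mul, mul_sub, sub_mul, mul_nonsing_inv _ hL.det_pos.ne'.isUnit,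
      Matrix.one_mul, Matrix.mul_smul, Matrix.smul_mul]
    abel
  rw [hsplit]
  refine PosDef.posSemidef_add (hS.smul (a := (n : ℂ)⁻¹) (by positivity)) ?_
  simpa [hL.1.eq] using hL.inv_sub_inv_one_add.conjTranspose_mul_mul_same
    (mulVec_injective_iff_isUnit.mpr hL.isUnit)

lemma sum_conj_inv_eq_smul (hn : n ≠ 0) :
    ∑ i, U i * ((U i)ᴴ * L * U i)⁻¹ * (U i)ᴴ = (n : ℂ) • (Delta U L + (1 + L)⁻¹) := by
  simp [Delta, smul_smul, hn]

lemma sum_re_trace_sub_re_trace_eq (hn : n ≠ 0) {K : Matrix (Fin N) (Fin N) ℂ}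
    (hK : K = L * Delta U L * L) (hL : IsUnit L.det) (hLK : IsUnit (L + K).det) :
    ∑ i, (U i * ((U i)ᴴ * L * U i)⁻¹ * (U i)ᴴ * (L - L * (L + K)⁻¹ * L)).trace.re
      - n * ((1 + L)⁻¹ * K).trace.re = n * ((L⁻¹ - (1 + L)⁻¹) * K * (L + K)⁻¹ * K).trace.re := by
  rw [← Complex.re_sum, ← trace_sum, ← Finset.sum_mul, sum_conj_inv_eq_smul U hn, smul_mul,
    trace_smul, smul_eq_mul, ← Complex.ofReal_natCast, Complex.re_ofReal_mul, ← mul_sub,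
    ← Complex.sub_re, ← trace_sub, add_mul_sub_mul_inv_mul_sub_mul hK hL hLK]

end DPP

theorem picard_step_ascent_general {N n : ℕ} (hn : 0 < n)
    {k : Fin n → ℕ}
    (U : (i : Fin n) → Matrix (Fin N) (Fin (k i)) ℂ)
    (hU : ∀ i, (U i)ᴴ * U i = 1)
    (L : Matrix (Fin N) (Fin N) ℂ) (hL : L.PosDef) :
    phi U L ≤ phi U (L + L * Delta U L * L) := by
  set K := L * Delta U L * L with hK
  clear_value K
  have hL' : (L + K).PosDef := hK ▸ posDef_add_mul_Delta_mul U hL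
  have hUinj (i : Fin n) : Function.Injective (U i).mulVec := fun x y h => by
    simpa [mulVec_mulVec, hU i] using congrArg ((U i)ᴴ *ᵥ ·) h
  have hsample := Finset.sum_le_sum (s := Finset.univ) fun i _ =>
    log_re_det_conj_add_re_trace_le hL hL' (hUinj i)
  rw [Finset.sum_add_distrib] at hsample
  have hnormalizer := (hL'.posSemidef_add PosSemidef.one).log_re_det_le_add_re_trace
    (hL.posSemidef_add PosSemidef.one)
  rw [add_sub_add_left_eq_sub, add_sub_cancel_left] at hnormalizer
  have hgain := sum_re_trace_sub_re_trace_eq U hn.ne' hK hL.det_pos.ne'.isUnit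
    hL'.det_pos.ne'.isUnit
  have hgain_nonneg : 0 ≤ ((L⁻¹ - (1 + L)⁻¹) * K * (L + K)⁻¹ * K).trace.re := by
    have hKH : Kᴴ = K := by simpa using (hL'.1.sub hL.1).eq
    rw [Matrix.mul_assoc _ K, Matrix.mul_assoc]
    refine hL.inv_sub_inv_one_add.posSemidef.re_trace_mul_nonneg ?_
    simpa [hKH, Matrix.mul_assoc] using hL'.inv.posSemidef.conjTranspose_mul_mul_same K
  have hn0 : (0 : ℝ) ≤ n := n.cast_nonneg
  simp only [phi]
  linarith [mul_le_mul_of_nonneg_left hnormalizer hn0, mul_nonneg hn0 hgain_nonneg]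

/-- Single-step ascent: if L is Hermitian positive definite and
L' = L + L Δ(L) L, then φ(L') ≥ φ(L). -/
theorem picard_step_ascent {N n : ℕ} (hN : 0 < N) (hn : 0 < n)
    {k : Fin n → ℕ} (hk1 : ∀ i, 1 ≤ k i) (hkN : ∀ i, k i ≤ N)
    (U : (i : Fin n) → Matrix (Fin N) (Fin (k i)) ℂ)
    (hU : ∀ i, (U i)ᴴ * U i = 1)
    (L : Matrix (Fin N) (Fin N) ℂ) (hL : L.PosDef) :
    phi U L ≤ phi U (L + L * Delta U L * L) :=
  picard_step_ascent_general hn U hU L hL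
end

section
/- The function h(S) = (1/n)∑_{i=1}^n log det(Uᵢ* S⁻¹ Uᵢ) − log det(I+S) is convex on the set of N×N Hermitian positive definite complex matrices; that is, for all Hermitian positive definite S, T and all t ∈ [0,1], h(tS + (1−t)T) ≤ t·h(S) + (1−t)·h(T). -/
/-!
The map `S ↦ (Uᴴ S⁻¹ U)⁻¹` is concave in the Loewner order: it is the pointwise minimum of the
linear maps `S ↦ Zᴴ S Z` over all `Z` with `Zᴴ U = 1`, the minimum being attained at
`Z = S⁻¹ U (Uᴴ S⁻¹ U)⁻¹`, and the lower bound is a Schur complement inequality. As `log det` is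
concave and monotone on positive definite matrices, `log det (Uᴴ S⁻¹ U) = - log det (Uᴴ S⁻¹ U)⁻¹`
is convex in `S`, and so is `- log det (1 + S)`. Both properties of `log det` reduce, through a
congruence `B = Q⋆ Q`, `A = Q⋆ M Q`, to the eigenvalues of `M`: then
`det (a A + b B) = det B * ∏ᵢ (a λᵢ + b)` and concavity of the real logarithm applies.
-/

open Matrix
open scoped ComplexOrder

/-- h(S) = (1/n)∑ᵢ log det(Uᵢ* S⁻¹ Uᵢ) − log det(I+S). -/
noncomputable def hFun {N n : ℕ} {k : Fin n → ℕ}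
    (U : (i : Fin n) → Matrix (Fin N) (Fin (k i)) ℂ)
    (S : Matrix (Fin N) (Fin N) ℂ) : ℝ :=
  (n : ℝ)⁻¹ * (∑ i, Real.log (((U i)ᴴ * S⁻¹ * U i).det.re)) -
    Real.log ((1 + S).det.re)

theorem convexOn_sum {𝕜 E β ι : Type*} [Semiring 𝕜] [PartialOrder 𝕜] [AddCommMonoid E]
    [AddCommMonoid β] [PartialOrder β] [IsOrderedAddMonoid β] [SMul 𝕜 E] [Module 𝕜 β]
    {s : Set E} (hs : Convex 𝕜 s) {t : Finset ι} {f : ι → E → β}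
    (hf : ∀ i ∈ t, ConvexOn 𝕜 s (f i)) : ConvexOn 𝕜 s (fun x => ∑ i ∈ t, f i x) := by
  classical
  induction t using Finset.induction_on with
  | empty => simpa using convexOn_const (0 : β) hs
  | insert a t ha ih =>
    simp_rw [Finset.sum_insert ha]
    exact (hf a (Finset.mem_insert_self a t)).add
      (ih fun i hi => hf i (Finset.mem_insert_of_mem hi))

namespace Matrix

open scoped MatrixOrder

variable {𝕜 m l : Type*} [RCLike 𝕜]

theorem convex_setOf_posDef : Convex ℝ {A : Matrix m m 𝕜 | A.PosDef} := by
  intro A hA B hB a b ha hb hab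
  rcases ha.eq_or_lt with rfl | ha
  · simpa [show b = 1 by linarith] using hB
  · exact (hA.smul ha).add_posSemidef (hB.posSemidef.smul hb)

variable [Fintype m] [DecidableEq m] [Fintype l] [DecidableEq l]

theorem IsHermitian.det_cfc {A : Matrix m m 𝕜} (hA : A.IsHermitian) (f : ℝ → ℝ) :
    (cfc f A).det = ∏ i, (f (hA.eigenvalues i) : 𝕜) := by
  simp [hA.cfc_eq, IsHermitian.cfc, -Unitary.conjStarAlgAut_apply]

theorem IsHermitian.det_smul_add_smul_one {A : Matrix m m 𝕜} (hA : A.IsHermitian) (a b : ℝ) :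
    (a • A + b • 1).det = ((∏ i, (a * hA.eigenvalues i + b) : ℝ) : 𝕜) := by
  have hA' : IsSelfAdjoint A := hA
  have : a • A + b • 1 = cfc (fun x => a * x + b) A := by
    rw [cfc_add .., cfc_const_mul .., cfc_id' .., cfc_const .., Algebra.algebraMap_eq_smul_one]
  rw [this, hA.det_cfc, RCLike.ofReal_prod]

theorem re_det_smul_star_mul_mul_add_smul_star_mul_self (Q : Matrix m m 𝕜)
    {M : Matrix m m 𝕜} (hM : M.IsHermitian) (a b : ℝ) :
    RCLike.re (a • (star Q * M * Q) + b • (star Q * Q)).det =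
      RCLike.re (star Q * Q).det * ∏ i, (a * hM.eigenvalues i + b) := by
  have : a • (star Q * M * Q) + b • (star Q * Q) = star Q * (a • M + b • 1) * Q := by
    simp only [Matrix.mul_add, Matrix.add_mul, Matrix.mul_smul, Matrix.smul_mul, Matrix.mul_one]
  rw [this, det_mul, det_mul, mul_right_comm, ← det_mul, hM.det_smul_add_smul_one,
    RCLike.re_mul_ofReal]

theorem PosDef.re_det_pos {A : Matrix m m 𝕜} (hA : A.PosDef) : 0 < RCLike.re A.det :=
  (RCLike.pos_iff.mp hA.det_pos).1

theorem PosDef.exists_star_mul_self_eq_and_star_mul_mul_eq {B : Matrix m m 𝕜} (hB : B.PosDef)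
    (A : Matrix m m 𝕜) : ∃ Q M, IsUnit Q ∧ B = star Q * Q ∧ A = star Q * M * Q := by
  obtain ⟨Q, hQ, rfl⟩ :=
    CStarAlgebra.isStrictlyPositive_iff_eq_star_mul_self.mp hB.isStrictlyPositive
  lift Q to (Matrix m m 𝕜)ˣ using hQ
  refine ⟨Q, star (↑Q⁻¹ : Matrix m m 𝕜) * A * (↑Q⁻¹ : Matrix m m 𝕜), Q.isUnit, rfl, ?_⟩
  simp only [Matrix.mul_assoc, Units.inv_mul, Matrix.mul_one]
  rw [← Matrix.mul_assoc, ← star_mul, Units.inv_mul, star_one, Matrix.one_mul]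

theorem concaveOn_log_det :
    ConcaveOn ℝ {A : Matrix m m 𝕜 | A.PosDef} (fun A => Real.log (RCLike.re A.det)) := by
  refine ⟨convex_setOf_posDef, fun A hA B hB a b ha hb hab => ?_⟩
  obtain ⟨Q, M, hQ, rfl, rfl⟩ := PosDef.exists_star_mul_self_eq_and_star_mul_mul_eq hB A
  have hM : M.PosDef := hQ.posDef_star_left_conjugate_iff.mp hA
  have hd : 0 < RCLike.re (star Q * Q).det := PosDef.re_det_pos hB
  have hμ := hM.eigenvalues_pos
  have hdet := re_det_smul_star_mul_mul_add_smul_star_mul_self Q hM.isHermitian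
  have hdetA := hdet 1 0
  simp only [one_smul, zero_smul, add_zero, one_mul] at hdetA
  have hcomb : ∀ i, 0 < a * hM.isHermitian.eigenvalues i + b := fun i => by
    simpa using convex_Ioi (0 : ℝ) (hμ i) (Set.mem_Ioi.mpr one_pos) ha hb hab
  simp only [smul_eq_mul]
  rw [hdet, hdetA, Real.log_mul hd.ne' (Finset.prod_pos fun i _ => hμ i).ne',
    Real.log_mul hd.ne' (Finset.prod_pos fun i _ => hcomb i).ne',
    Real.log_prod fun i _ => (hμ i).ne', Real.log_prod fun i _ => (hcomb i).ne']
  have key : ∀ i, a * Real.log (hM.isHermitian.eigenvalues i) ≤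
      Real.log (a * hM.isHermitian.eigenvalues i + b) := fun i => by
    simpa using strictConcaveOn_log_Ioi.concaveOn.2 (hμ i) (Set.mem_Ioi.mpr one_pos) ha hb hab
  have := Finset.sum_le_sum fun i (_ : i ∈ Finset.univ) => key i
  rw [← Finset.mul_sum] at this
  linear_combination this + Real.log (RCLike.re (star Q * Q).det) * hab

theorem monotoneOn_log_det :
    MonotoneOn (fun A : Matrix m m 𝕜 => Real.log (RCLike.re A.det)) {A | A.PosDef} := by
  intro A hA B _ hAB
  obtain ⟨Q, M, hQ, rfl, hM⟩ := PosDef.exists_star_mul_self_eq_and_star_mul_mul_eq hA (B - A)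
  have hMpsd : M.PosSemidef := hQ.posSemidef_star_left_conjugate_iff.mp (hM ▸ hAB)
  have hB : B = (1 : ℝ) • (star Q * M * Q) + (1 : ℝ) • (star Q * Q) := by simp [← hM]
  refine Real.log_le_log (PosDef.re_det_pos hA) ?_
  rw [hB, re_det_smul_star_mul_mul_add_smul_star_mul_self Q hMpsd.isHermitian]
  refine le_mul_of_one_le_right (PosDef.re_det_pos hA).le (Finset.one_le_prod fun i _ => ?_)
  linarith [hMpsd.eigenvalues_nonneg i]

/-- The Schur complement of `S` in `fromBlocks S U Uᴴ (Uᴴ * S⁻¹ * U)` vanishes, so this block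
matrix is positive semidefinite, hence so is its other Schur complement. -/
theorem PosDef.mul_inv_conjTranspose_mul_inv_mul_conjTranspose_le {S : Matrix m m 𝕜}
    (hS : S.PosDef) {U : Matrix m l 𝕜} (hU : Function.Injective U.mulVec) :
    U * (Uᴴ * S⁻¹ * U)⁻¹ * Uᴴ ≤ S := by
  have hD : (Uᴴ * S⁻¹ * U).PosDef := hS.inv.conjTranspose_mul_mul_same hU
  have := hS.isUnit.invertible
  have := hD.isUnit.invertible
  rw [le_iff, ← hD.fromBlocks₂₂, hS.fromBlocks₁₁, sub_self]
  exact .zero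

theorem PosDef.isLeast_inv_conjTranspose_mul_inv_mul {S : Matrix m m 𝕜} (hS : S.PosDef)
    {U : Matrix m l 𝕜} (hU : Function.Injective U.mulVec) :
    IsLeast {X | ∃ Z : Matrix m l 𝕜, Zᴴ * U = 1 ∧ X = Zᴴ * S * Z} (Uᴴ * S⁻¹ * U)⁻¹ := by
  have hD : (Uᴴ * S⁻¹ * U).PosDef := hS.inv.conjTranspose_mul_mul_same hU
  set G := (Uᴴ * S⁻¹ * U)⁻¹
  have hGD : G * Uᴴ * S⁻¹ * U = 1 := by
    rw [Matrix.mul_assoc (G * Uᴴ), Matrix.mul_assoc G, ← Matrix.mul_assoc Uᴴ]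
    exact nonsing_inv_mul _ ((isUnit_iff_isUnit_det _).mp hD.isUnit)
  have hGH : Gᴴ = G := hD.inv.isHermitian
  constructor
  · refine ⟨S⁻¹ * U * G, ?_, ?_⟩
    all_goals simp only [conjTranspose_mul, hGH, hS.inv.isHermitian.eq, ← Matrix.mul_assoc]
    · exact hGD
    · rw [Matrix.mul_assoc _ S⁻¹ S, nonsing_inv_mul _ ((isUnit_iff_isUnit_det _).mp hS.isUnit),
        Matrix.mul_one, hGD, Matrix.one_mul]
  · rintro _ ⟨Z, hZ, rfl⟩
    have hZ' : Uᴴ * Z = 1 := by simpa using congrArg Matrix.conjTranspose hZ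
    have := (hS.mul_inv_conjTranspose_mul_inv_mul_conjTranspose_le hU).conjTranspose_mul_mul_same Z
    rwa [Matrix.mul_sub, Matrix.sub_mul, show Zᴴ * (U * G * Uᴴ) * Z = (Zᴴ * U) * G * (Uᴴ * Z) by
      simp only [Matrix.mul_assoc], hZ, hZ', Matrix.one_mul, Matrix.mul_one] at this

theorem concaveOn_inv_conjTranspose_mul_inv_mul {U : Matrix m l 𝕜}
    (hU : Function.Injective U.mulVec) :
    ConcaveOn ℝ {S : Matrix m m 𝕜 | S.PosDef} (fun S => (Uᴴ * S⁻¹ * U)⁻¹) := by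
  refine ⟨convex_setOf_posDef, fun S hS T hT a b ha hb hab => ?_⟩
  have hR : (a • S + b • T).PosDef := convex_setOf_posDef hS hT ha hb hab
  obtain ⟨Z, hZ, hZR⟩ := (hR.isLeast_inv_conjTranspose_mul_inv_mul hU).1
  calc a • (Uᴴ * S⁻¹ * U)⁻¹ + b • (Uᴴ * T⁻¹ * U)⁻¹ ≤ a • (Zᴴ * S * Z) + b • (Zᴴ * T * Z) :=
        add_le_add
          (smul_le_smul_of_nonneg_left
            ((hS.isLeast_inv_conjTranspose_mul_inv_mul hU).2 ⟨Z, hZ, rfl⟩) ha)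
          (smul_le_smul_of_nonneg_left
            ((hT.isLeast_inv_conjTranspose_mul_inv_mul hU).2 ⟨Z, hZ, rfl⟩) hb)
    _ = (Uᴴ * (a • S + b • T)⁻¹ * U)⁻¹ := by
      rw [hZR, Matrix.mul_add, Matrix.add_mul, Matrix.mul_smul, Matrix.smul_mul, Matrix.mul_smul,
        Matrix.smul_mul]

theorem PosDef.log_re_det_inv {A : Matrix m m 𝕜} (hA : A.PosDef) :
    Real.log (RCLike.re A⁻¹.det) = -Real.log (RCLike.re A.det) := by
  rw [det_nonsing_inv, Ring.inverse_eq_inv', hA.isHermitian.det_eq_prod_eigenvalues,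
    ← RCLike.ofReal_prod, ← RCLike.ofReal_inv, RCLike.ofReal_re, RCLike.ofReal_re, Real.log_inv]

theorem convexOn_log_det_conjTranspose_mul_inv_mul {U : Matrix m l 𝕜}
    (hU : Function.Injective U.mulVec) :
    ConvexOn ℝ {S : Matrix m m 𝕜 | S.PosDef}
      (fun S => Real.log (RCLike.re (Uᴴ * S⁻¹ * U).det)) := by
  refine ⟨convex_setOf_posDef, fun S hS T hT a b ha hb hab => ?_⟩
  have hD : ∀ X : Matrix m m 𝕜, X.PosDef → (Uᴴ * X⁻¹ * U).PosDef := fun X hX =>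
    hX.inv.conjTranspose_mul_mul_same hU
  have hR : (a • S + b • T).PosDef := convex_setOf_posDef hS hT ha hb hab
  have hmono := monotoneOn_log_det (convex_setOf_posDef (hD S hS).inv (hD T hT).inv ha hb hab)
    (hD _ hR).inv ((concaveOn_inv_conjTranspose_mul_inv_mul hU).2 hS hT ha hb hab)
  have hconc := concaveOn_log_det.2 (hD S hS).inv (hD T hT).inv ha hb hab
  simp only [smul_eq_mul, (hD _ hS).log_re_det_inv, (hD _ hT).log_re_det_inv,
    (hD _ hR).log_re_det_inv] at hmono hconc ⊢
  linarith

end Matrix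

theorem convexOn_hFun {N n : ℕ} {k : Fin n → ℕ}
    (U : (i : Fin n) → Matrix (Fin N) (Fin (k i)) ℂ)
    (hU : ∀ i, Function.Injective (U i).mulVec) :
    ConvexOn ℝ {S | S.PosDef} (hFun U) := by
  have hsum := convexOn_sum convex_setOf_posDef fun i (_ : i ∈ Finset.univ) =>
    convexOn_log_det_conjTranspose_mul_inv_mul (hU i)
  have hlog := ((concaveOn_log_det (𝕜 := ℂ) (m := Fin N)).translate_right 1).subset
    (fun S hS => show (1 + S).PosDef from PosDef.one.add hS) convex_setOf_posDef
  refine ((hsum.smul (inv_nonneg.2 (n.cast_nonneg (α := ℝ)))).sub hlog).congr fun S _ => ?_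
  simp only [hFun, Pi.sub_apply, Function.comp_apply, smul_eq_mul, RCLike.re_to_complex]

theorem hFun_convex_general {N n : ℕ} {k : Fin n → ℕ}
    (U : (i : Fin n) → Matrix (Fin N) (Fin (k i)) ℂ)
    (hU : ∀ i, (U i)ᴴ * U i = 1)
    (S T : Matrix (Fin N) (Fin N) ℂ) (hS : S.PosDef) (hT : T.PosDef)
    (t : ℝ) (ht0 : 0 ≤ t) (ht1 : t ≤ 1) :
    hFun U ((t : ℂ) • S + ((1 - t : ℝ) : ℂ) • T) ≤
      t * hFun U S + (1 - t) * hFun U T := by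
  have hinj : ∀ i, Function.Injective (U i).mulVec := fun i x y hxy => by
    simpa [mulVec_mulVec, hU i] using congrArg ((U i)ᴴ *ᵥ ·) hxy
  simpa only [Complex.coe_smul, smul_eq_mul] using
    (convexOn_hFun U hinj).2 hS hT ht0 (sub_nonneg.2 ht1) (add_sub_cancel t 1)

/-- The function h(S) = (1/n)∑ᵢ log det(Uᵢ* S⁻¹ Uᵢ) − log det(I+S) is convex on the
set of Hermitian positive definite matrices. -/
theorem hFun_convex {N n : ℕ} (hN : 0 < N) (hn : 0 < n)
    {k : Fin n → ℕ} (hk1 : ∀ i, 1 ≤ k i) (hkN : ∀ i, k i ≤ N)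
    (U : (i : Fin n) → Matrix (Fin N) (Fin (k i)) ℂ)
    (hU : ∀ i, (U i)ᴴ * U i = 1)
    (S T : Matrix (Fin N) (Fin N) ℂ) (hS : S.PosDef) (hT : T.PosDef)
    (t : ℝ) (ht0 : 0 ≤ t) (ht1 : t ≤ 1) :
    hFun U ((t : ℂ) • S + ((1 - t : ℝ) : ℂ) • T) ≤
      t * hFun U S + (1 - t) * hFun U T :=
  hFun_convex_general U hU S T hS hT t ht0 ht1
end
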